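/- Let P be a full-support probability on 𝕊 and let V : 𝕊 → ℝ be monotone with V(s) > 0 for all s ∈ 𝕊. For a positive valuation ν : 𝕊 → (0, ∞), let ν' := ν_P^{μ_ν} be the result of one fixed-point (majorize-minorize) step. Then f(ν') ≥ f(ν): each iteration of the core-attribution fixed-point algorithm does not decrease the objective f. -/

import Mathlib

open Finset

namespace CoreAttr

variable (A : Type) [Fintype A] [DecidableEq A]

def listsLe : ℕ → Finset (List A)
  | 0 => {[]}
  | n + 1 => {[]} ∪ (Finset.univ ×ˢ listsLe n).image fun p : A × List A => p.1 :: p.2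

theorem mem_listsLe (n : ℕ) (l : List A) : l ∈ listsLe A n ↔ l.length ≤ n := by
  induction n generalizing l with
  | zero => simp [listsLe, Nat.le_zero, List.length_eq_zero_iff]
  | succ n ih =>
    cases l with
    | nil => simp [listsLe]
    | cons a t => simp [listsLe, ih, Nat.succ_le_succ_iff]

/-- The set of scenarios: nonempty lists of actions of length at most `L`. -/
def scenarios (L : ℕ) : Finset (List A) := (listsLe A L).filter fun s => s ≠ []

theorem mem_scenarios (L : ℕ) (l : List A) :
    l ∈ scenarios A L ↔ l ≠ [] ∧ l.length ≤ L := by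
  simp [scenarios, mem_listsLe, and_comm]

variable {A}

/-- `P` is a probability on the finite set `𝕊`. -/
def IsProb (𝕊 : Finset (List A)) (P : List A → ℝ) : Prop :=
  (∀ s ∈ 𝕊, 0 ≤ P s) ∧ ∑ s ∈ 𝕊, P s = 1

def FullSupport (𝕊 : Finset (List A)) (P : List A → ℝ) : Prop :=
  ∀ s ∈ 𝕊, 0 < P s

/-- `μ` is an internal attribution for the reward `V`. -/
def IsInternalAttr (𝕊 : Finset (List A)) (V : List A → ℝ) (μ : ℕ → List A → ℝ) : Prop :=
  (∀ i : ℕ, ∀ s ∈ 𝕊, 0 ≤ μ i s) ∧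
  (∀ i : ℕ, ∀ s ∈ 𝕊, ¬(1 ≤ i ∧ i ≤ s.length) → μ i s = 0) ∧
  (∀ s ∈ 𝕊, ∑ i ∈ Finset.Icc 1 s.length, μ i s = V s)

/-- The valuation associated with attribution `μ` under probability `P`:
`ν_P^μ(s) = E_{S∼P}[μ(ℓ(s), S) | S ≽ s]`. -/
noncomputable def assocVal (𝕊 : Finset (List A)) (P : List A → ℝ) (μ : ℕ → List A → ℝ)
    (s : List A) : ℝ :=
  (∑ s' ∈ 𝕊.filter (fun s' => s <+: s'), P s' * μ s.length s') /
    (∑ s' ∈ 𝕊.filter (fun s' => s <+: s'), P s')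

/-- `Σ_{j=1}^{ℓ(s)} ν(s^j)`. -/
noncomputable def sumPrefix (ν : List A → ℝ) (s : List A) : ℝ :=
  ∑ j ∈ Finset.Icc 1 s.length, ν (s.take j)

/-- The fixed-point attribution `μ_ν`. -/
noncomputable def muFP (V ν : List A → ℝ) (i : ℕ) (s : List A) : ℝ :=
  if 1 ≤ i ∧ i ≤ s.length then ν (s.take i) * V s / sumPrefix ν s else 0

/-- The MM objective `f`. -/
noncomputable def fObj (𝕊 : Finset (List A)) (P V ν : List A → ℝ) : ℝ :=
  ∑ s ∈ 𝕊, P s * (V s * Real.log (sumPrefix ν s) - sumPrefix ν s)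

/-- The MM surrogate `g(ν | ν̂)`. -/
noncomputable def gSurr (𝕊 : Finset (List A)) (P V ν νh : List A → ℝ) : ℝ :=
  ∑ s ∈ 𝕊, P s * ∑ j ∈ Finset.Icc 1 s.length,
    (νh (s.take j) * V s / sumPrefix νh s *
        Real.log (ν (s.take j) / νh (s.take j) * sumPrefix νh s) -
      ν (s.take j))

theorem take_mem_scenarios {L : ℕ} {s : List A} (hs : s ∈ scenarios A L)
    {j : ℕ} (hj : j ∈ Finset.Icc 1 s.length) : s.take j ∈ scenarios A L := by
  rw [mem_scenarios] at hs ⊢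
  rw [Finset.mem_Icc] at hj
  have hlen : (s.take j).length = j := by rw [List.length_take]; omega
  constructor
  · intro h; rw [h] at hlen; simp at hlen; omega
  · rw [hlen]; exact hj.2.trans hs.2

theorem sumPrefix_pos {L : ℕ} {ν : List A → ℝ} (hν : ∀ t ∈ scenarios A L, 0 < ν t)
    {s : List A} (hs : s ∈ scenarios A L) : 0 < sumPrefix ν s := by
  apply Finset.sum_pos
  · intro j hj; exact hν _ (take_mem_scenarios hs hj)
  · refine Finset.nonempty_Icc.mpr ?_
    have := ((mem_scenarios A L s).mp hs).1
    have := List.length_pos_iff.mpr this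
    omega

theorem reindex {L : ℕ} (F : List A → List A → ℝ) :
    ∑ s ∈ scenarios A L, ∑ j ∈ Finset.Icc 1 s.length, F (s.take j) s
      = ∑ t ∈ scenarios A L, ∑ s ∈ (scenarios A L).filter (fun s => t <+: s), F t s := by
  have h1 : ∀ s ∈ scenarios A L, ∑ j ∈ Finset.Icc 1 s.length, F (s.take j) s
      = ∑ t ∈ (scenarios A L).filter (fun t => t <+: s), F t s := by
    intro s hs
    refine Finset.sum_nbij' (i := fun j => s.take j) (j := fun t => t.length) ?_ ?_ ?_ ?_ ?_
    · intro j hj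
      exact Finset.mem_filter.mpr ⟨take_mem_scenarios hs hj, List.take_prefix j s⟩
    · intro t htf
      rw [Finset.mem_filter] at htf
      rw [Finset.mem_Icc]
      have h1 : t ≠ [] := ((mem_scenarios A L t).mp htf.1).1
      have := List.length_pos_iff.mpr h1
      have := htf.2.length_le
      omega
    · intro j hj
      rw [Finset.mem_Icc] at hj
      rw [List.length_take]; omega
    · intro t htf
      rw [Finset.mem_filter] at htf
      exact (List.prefix_iff_eq_take.mp htf.2).symm
    · intro j hj; rfl
  rw [Finset.sum_congr rfl h1]
  simp only [Finset.sum_filter]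
  exact Finset.sum_comm

theorem assocVal_muFP_eq {L : ℕ} (P V ν : List A → ℝ) {t : List A} (ht : t ∈ scenarios A L) :
    assocVal (scenarios A L) P (muFP V ν) t
      = (∑ s ∈ (scenarios A L).filter (fun s => t <+: s), P s * (ν t * V s / sumPrefix ν s)) /
        (∑ s ∈ (scenarios A L).filter (fun s => t <+: s), P s) := by
  unfold assocVal muFP
  congr 1
  apply Finset.sum_congr rfl
  intro s hsf
  rw [Finset.mem_filter] at hsf
  obtain ⟨hs, hpre⟩ := hsf
  have h0 : t ≠ [] := ((mem_scenarios A L t).mp ht).1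
  have h1 : 1 ≤ t.length := List.length_pos_iff.mpr h0
  have h2 : t.length ≤ s.length := hpre.length_le
  rw [if_pos ⟨h1, h2⟩, show s.take t.length = t from (List.prefix_iff_eq_take.mp hpre).symm]

theorem denom_pos {L : ℕ} {P : List A → ℝ}
    (hP : ∀ s ∈ scenarios A L, 0 ≤ P s) (hPfull : ∀ s ∈ scenarios A L, 0 < P s)
    {t : List A} (ht : t ∈ scenarios A L) :
    0 < ∑ s ∈ (scenarios A L).filter (fun s => t <+: s), P s := by
  apply Finset.sum_pos
  · intro s hsf; exact hPfull s (Finset.mem_filter.mp hsf).1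
  · exact ⟨t, Finset.mem_filter.mpr ⟨ht, List.prefix_refl t⟩⟩

theorem numer_pos {L : ℕ} {P V ν : List A → ℝ}
    (hPfull : ∀ s ∈ scenarios A L, 0 < P s)
    (hVpos : ∀ s ∈ scenarios A L, 0 < V s)
    (hν : ∀ s ∈ scenarios A L, 0 < ν s)
    {t : List A} (ht : t ∈ scenarios A L) :
    0 < ∑ s ∈ (scenarios A L).filter (fun s => t <+: s), P s * (ν t * V s / sumPrefix ν s) := by
  apply Finset.sum_pos
  · intro s hsf
    have hs := (Finset.mem_filter.mp hsf).1
    have := sumPrefix_pos hν hs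
    have := hPfull s hs
    have := hVpos s hs
    have := hν t ht
    positivity
  · exact ⟨t, Finset.mem_filter.mpr ⟨ht, List.prefix_refl t⟩⟩

theorem assocVal_muFP_pos {L : ℕ} {P V ν : List A → ℝ}
    (hP : ∀ s ∈ scenarios A L, 0 ≤ P s) (hPfull : ∀ s ∈ scenarios A L, 0 < P s)
    (hVpos : ∀ s ∈ scenarios A L, 0 < V s)
    (hν : ∀ s ∈ scenarios A L, 0 < ν s)
    {t : List A} (ht : t ∈ scenarios A L) :
    0 < assocVal (scenarios A L) P (muFP V ν) t := by
  rw [assocVal_muFP_eq P V ν ht]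
  exact div_pos (numer_pos hPfull hVpos hν ht) (denom_pos hP hPfull ht)

theorem gSurr_self {L : ℕ} (P V ν : List A → ℝ)
    (hν : ∀ t ∈ scenarios A L, 0 < ν t) :
    gSurr (scenarios A L) P V ν ν = fObj (scenarios A L) P V ν := by
  unfold gSurr fObj
  apply Finset.sum_congr rfl
  intro s hs
  congr 1
  have hS : 0 < sumPrefix ν s := sumPrefix_pos hν hs
  have key : ∀ j ∈ Finset.Icc 1 s.length,
      ν (s.take j) * V s / sumPrefix ν s *
          Real.log (ν (s.take j) / ν (s.take j) * sumPrefix ν s) - ν (s.take j)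
      = ν (s.take j) * (V s / sumPrefix ν s * Real.log (sumPrefix ν s)) - ν (s.take j) := by
    intro j hj
    have h0 : ν (s.take j) ≠ 0 := (hν _ (take_mem_scenarios hs hj)).ne'
    rw [div_self h0, one_mul]; ring
  rw [Finset.sum_congr rfl key, Finset.sum_sub_distrib, ← Finset.sum_mul]
  rw [show (∑ j ∈ Finset.Icc 1 s.length, ν (s.take j)) = sumPrefix ν s from rfl]
  field_simp

theorem gSurr_le_fObj {L : ℕ} (P V ν₂ ν : List A → ℝ)
    (hP : ∀ s ∈ scenarios A L, 0 ≤ P s)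
    (hV : ∀ s ∈ scenarios A L, 0 ≤ V s)
    (hν : ∀ t ∈ scenarios A L, 0 < ν t) (hν₂ : ∀ t ∈ scenarios A L, 0 < ν₂ t) :
    gSurr (scenarios A L) P V ν₂ ν ≤ fObj (scenarios A L) P V ν₂ := by
  apply Finset.sum_le_sum
  intro s hs
  apply mul_le_mul_of_nonneg_left _ (hP s hs)
  have hS : 0 < sumPrefix ν s := sumPrefix_pos hν hs
  have hS₂ : 0 < sumPrefix ν₂ s := sumPrefix_pos hν₂ hs
  rw [Finset.sum_sub_distrib,
    show (∑ j ∈ Finset.Icc 1 s.length, ν₂ (s.take j)) = sumPrefix ν₂ s from rfl]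
  apply sub_le_sub_right
  have jensen : ∑ j ∈ Finset.Icc 1 s.length,
      (ν (s.take j) / sumPrefix ν s) •
        Real.log (ν₂ (s.take j) / ν (s.take j) * sumPrefix ν s)
      ≤ Real.log (∑ j ∈ Finset.Icc 1 s.length,
          (ν (s.take j) / sumPrefix ν s) • (ν₂ (s.take j) / ν (s.take j) * sumPrefix ν s)) := by
    apply (strictConcaveOn_log_Ioi.concaveOn).le_map_sum
    · intro j hj
      have := hν _ (take_mem_scenarios hs hj)
      positivity
    · rw [← Finset.sum_div,
        show (∑ j ∈ Finset.Icc 1 s.length, ν (s.take j)) = sumPrefix ν s from rfl]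
      exact div_self hS.ne'
    · intro j hj
      have h1 := hν _ (take_mem_scenarios hs hj)
      have h2 := hν₂ _ (take_mem_scenarios hs hj)
      exact Set.mem_Ioi.mpr (by positivity)
  have hsum : (∑ j ∈ Finset.Icc 1 s.length,
      (ν (s.take j) / sumPrefix ν s) • (ν₂ (s.take j) / ν (s.take j) * sumPrefix ν s))
      = sumPrefix ν₂ s := by
    rw [show sumPrefix ν₂ s = ∑ j ∈ Finset.Icc 1 s.length, ν₂ (s.take j) from rfl]
    apply Finset.sum_congr rfl
    intro j hj
    have h1 : ν (s.take j) ≠ 0 := (hν _ (take_mem_scenarios hs hj)).ne'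
    rw [smul_eq_mul]
    field_simp
  rw [hsum] at jensen
  calc ∑ j ∈ Finset.Icc 1 s.length,
        ν (s.take j) * V s / sumPrefix ν s *
          Real.log (ν₂ (s.take j) / ν (s.take j) * sumPrefix ν s)
      = V s * ∑ j ∈ Finset.Icc 1 s.length,
          (ν (s.take j) / sumPrefix ν s) •
            Real.log (ν₂ (s.take j) / ν (s.take j) * sumPrefix ν s) := by
        rw [Finset.mul_sum]
        apply Finset.sum_congr rfl
        intro j hj
        rw [smul_eq_mul]; ring
    _ ≤ V s * Real.log (sumPrefix ν₂ s) :=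
        mul_le_mul_of_nonneg_left jensen (hV s hs)



theorem gSurr_le_gSurr_assoc {L : ℕ} (P V ν : List A → ℝ)
    (hP : ∀ s ∈ scenarios A L, 0 ≤ P s) (hPfull : ∀ s ∈ scenarios A L, 0 < P s)
    (hVpos : ∀ s ∈ scenarios A L, 0 < V s)
    (hν : ∀ t ∈ scenarios A L, 0 < ν t) :
    gSurr (scenarios A L) P V ν ν ≤
      gSurr (scenarios A L) P V (assocVal (scenarios A L) P (muFP V ν)) ν := by
  have grw : ∀ x : List A → ℝ, gSurr (scenarios A L) P V x ν
      = ∑ t ∈ scenarios A L, ∑ s ∈ (scenarios A L).filter (fun s => t <+: s),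
          P s * (ν t * V s / sumPrefix ν s * Real.log (x t / ν t * sumPrefix ν s) - x t) := by
    intro x
    rw [← reindex (F := fun t s => P s * (ν t * V s / sumPrefix ν s *
        Real.log (x t / ν t * sumPrefix ν s) - x t))]
    unfold gSurr
    exact Finset.sum_congr rfl fun s _ => Finset.mul_sum _ _ _
  rw [grw, grw]
  apply Finset.sum_le_sum
  intro t ht
  set ν' := assocVal (scenarios A L) P (muFP V ν) with hv'
  set T := (scenarios A L).filter (fun s => t <+: s) with hT
  set c := ∑ s ∈ T, P s * (ν t * V s / sumPrefix ν s) with hc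
  set d := ∑ s ∈ T, P s with hd
  have hcpos : 0 < c := numer_pos hPfull hVpos hν ht
  have hdpos : 0 < d := denom_pos hP hPfull ht
  have hνt : 0 < ν t := hν t ht
  have hν't : ν' t = c / d := by rw [hv', assocVal_muFP_eq P V ν ht, hc, hd]
  have hν'pos : 0 < ν' t := by rw [hν't]; positivity
  have expand : ∀ s ∈ T,
      P s * (ν t * V s / sumPrefix ν s * Real.log (ν' t / ν t * sumPrefix ν s) - ν' t)
      = P s * (ν t * V s / sumPrefix ν s * Real.log (ν t / ν t * sumPrefix ν s) - ν t)
        + P s * (ν t * V s / sumPrefix ν s) * Real.log (ν' t / ν t)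
        - P s * (ν' t - ν t) := by
    intro s hsT
    have hs : s ∈ scenarios A L := (Finset.mem_filter.mp hsT).1
    have hS : 0 < sumPrefix ν s := sumPrefix_pos hν hs
    rw [div_self hνt.ne', one_mul,
      Real.log_mul (div_pos hν'pos hνt).ne' hS.ne']
    ring
  rw [Finset.sum_congr rfl expand, Finset.sum_sub_distrib, Finset.sum_add_distrib,
    ← Finset.sum_mul, ← Finset.sum_mul, ← hc, ← hd]
  have hextra : 0 ≤ c * Real.log (ν' t / ν t) - d * (ν' t - ν t) := by
    have hr : (0:ℝ) < d * ν t / c := by positivity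
    have hlog := Real.log_le_sub_one_of_pos hr
    have hinv : Real.log (ν' t / ν t) = - Real.log (d * ν t / c) := by
      rw [← Real.log_inv]
      congr 1
      rw [hν't, div_div, inv_div]
    have h2 : d * (ν' t - ν t) = c - d * ν t := by
      rw [hν't]; field_simp
    have h3 : c * Real.log (d * ν t / c) ≤ c * (d * ν t / c - 1) :=
      mul_le_mul_of_nonneg_left hlog hcpos.le
    have h4 : c * (d * ν t / c - 1) = d * ν t - c := by field_simp
    rw [hinv, h2]
    nlinarith
  linarith

/-- **Each fixed-point (MM) step does not decrease the objective `f`.** -/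
theorem mm_step_increases_objective
    {A : Type} [Fintype A] [DecidableEq A] [Nonempty A] (L : ℕ) (hL : 1 ≤ L)
    (P : List A → ℝ) (hP : IsProb (scenarios A L) P)
    (hPfull : FullSupport (scenarios A L) P)
    (V : List A → ℝ) (hV0 : V [] = 0)
    (hmono : ∀ s ∈ scenarios A L, ∀ s' ∈ scenarios A L, s <+: s' → V s ≤ V s')
    (hVpos : ∀ s ∈ scenarios A L, 0 < V s)
    (ν : List A → ℝ) (hνpos : ∀ s ∈ scenarios A L, 0 < ν s) :
    fObj (scenarios A L) P V ν ≤
      fObj (scenarios A L) P V (assocVal (scenarios A L) P (muFP V ν)) := by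
  have hP0 : ∀ s ∈ scenarios A L, 0 ≤ P s := hP.1
  have hPf : ∀ s ∈ scenarios A L, 0 < P s := hPfull
  have h1 : fObj (scenarios A L) P V ν = gSurr (scenarios A L) P V ν ν :=
    (gSurr_self P V ν hνpos).symm
  have h2 := gSurr_le_gSurr_assoc P V ν hP0 hPf hVpos hνpos
  have h3 : gSurr (scenarios A L) P V (assocVal (scenarios A L) P (muFP V ν)) ν ≤
      fObj (scenarios A L) P V (assocVal (scenarios A L) P (muFP V ν)) :=
    gSurr_le_fObj P V _ ν hP0 (fun s hs => (hVpos s hs).le) hνpos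
      (fun u hu => assocVal_muFP_pos hP0 hPf hVpos hνpos hu)
  linarith

end CoreAttr
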